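/- Let (V, ω) be a symplectic vector space, C ⊆ V a coisotropic subspace, E := C^ω, and G a complement of E in C. Then E is a Lagrangian subspace of the symplectic vector space (G^ω, ω|_{G^ω}); that is, the ω-orthogonal of E computed inside G^ω equals E. Concretely: E^ω ∩ G^ω = E. -/
import Mathlib

lemma orth_sup {V : Type*} [AddCommGroup V] [Module ℝ V]
    (ω : LinearMap.BilinForm ℝ V) (A B : Submodule ℝ V) :
    ω.orthogonal (A ⊔ B) = ω.orthogonal A ⊓ ω.orthogonal B := by
  ext x
  simp only [LinearMap.BilinForm.mem_orthogonal_iff, Submodule.mem_inf]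
  constructor
  · intro h
    exact ⟨fun m hm => h m (Submodule.mem_sup_left hm),
           fun m hm => h m (Submodule.mem_sup_right hm)⟩
  · intro ⟨h1, h2⟩ m hm
    obtain ⟨a, ha, b, hb, rfl⟩ := Submodule.mem_sup.mp hm
    have := h1 a ha
    have := h2 b hb
    simp [LinearMap.add_apply, *]

/-- With `C` coisotropic in `(V, ω)`, `E := C^ω` and `G` a complement of `E`
in `C`, `E` is Lagrangian in `(G^ω, ω)`: `E^ω ∩ G^ω = E`. -/
theorem stmt6 {V : Type*} [AddCommGroup V] [Module ℝ V] [FiniteDimensional ℝ V]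
    (ω : LinearMap.BilinForm ℝ V) (halt : ω.IsAlt) (hnd : ω.Nondegenerate)
    (C G : Submodule ℝ V) (hco : ω.orthogonal C ≤ C)
    (hdisj : ω.orthogonal C ⊓ G = ⊥) (hsum : ω.orthogonal C ⊔ G = C) :
    ω.orthogonal (ω.orthogonal C) ⊓ ω.orthogonal G = ω.orthogonal C := by
  have h1 : ω.orthogonal (ω.orthogonal C) = C := by
    apply LinearMap.BilinForm.orthogonal_orthogonal hnd halt.isRefl
  have h2 := orth_sup ω (ω.orthogonal C) G
  rw [hsum, h1] at h2
  rw [h1]; exact h2.symm
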